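/- arXiv:2410.12756 — 6 statements merged into one kernel-verified Lean document; each statement's English description precedes it below -/
import Mathlib

section
/- Let λ ≥ 1 + 1/√2 be real and define A(s,t) = λs(2t - s) + s(1-t)(2 + λ + λt) + (1/3)(1-s)²(6 + λ + 2λs). Then for all real s, t with 0 ≤ s ≤ t ≤ 1, A(s,t) ≤ (1 + √2 + 3λ + 3λ³)/(3λ²), and equality holds at s = 1 - (1 + 1/√2)/λ and t = 1 - 1/λ. -/
/-!
The gap to the bound is an explicit sum of nonnegative terms: with `c = √2`,
`3λ²(bound - A(s,t)) = 3λs(λt - λ + 1)² + 2(λs - λ + 1 + c/2)²(λ(1 - s) - 1 + c)`,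
an identity modulo `c² = 2`. For `λ > 0` and `0 ≤ s ≤ 1` both terms are nonnegative
(as `c ≥ 1`), and both squares vanish at `t = 1 - 1/λ`, `s = 1 - (1 + c/2)/λ`
(note `1/√2 = √2/2`).
-/

open Real

noncomputable def twoThresholdValue (lam s t : ℝ) : ℝ :=
  lam * s * (2 * t - s) + s * (1 - t) * (2 + lam + lam * t) +
    (1 / 3) * (1 - s) ^ 2 * (6 + lam + 2 * lam * s)

theorem three_mul_sq_mul_twoThresholdValue (lam s t : ℝ) :
    3 * lam ^ 2 * twoThresholdValue lam s t =
      1 + √2 + 3 * lam + 3 * lam ^ 3 -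
        (3 * lam * s * (lam * t - lam + 1) ^ 2 +
          2 * (lam * s - lam + 1 + √2 / 2) ^ 2 * (lam * (1 - s) - 1 + √2)) := by
  unfold twoThresholdValue
  linear_combination
    ((√2 + 3 * (lam * s - lam + 1)) / 2) * sq_sqrt (zero_le_two : (0 : ℝ) ≤ 2)

theorem twoThresholdValue_le {lam s : ℝ} (hlam : 0 < lam) (hs₀ : 0 ≤ s) (hs₁ : s ≤ 1)
    (t : ℝ) :
    twoThresholdValue lam s t ≤ (1 + √2 + 3 * lam + 3 * lam ^ 3) / (3 * lam ^ 2) := by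
  have hsqrt : 1 ≤ √2 := one_le_sqrt.mpr one_le_two
  have hfactor : 0 ≤ lam * (1 - s) - 1 + √2 := by nlinarith
  have hgap := three_mul_sq_mul_twoThresholdValue lam s t
  rw [le_div_iff₀ (by positivity)]
  nlinarith [mul_nonneg (mul_nonneg hlam.le hs₀) (sq_nonneg (lam * t - lam + 1)),
    mul_nonneg (sq_nonneg (lam * s - lam + 1 + √2 / 2)) hfactor]

theorem twoThresholdValue_optimum {lam : ℝ} (hlam : lam ≠ 0) :
    twoThresholdValue lam (1 - (1 + 1 / √2) / lam) (1 - 1 / lam) =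
      (1 + √2 + 3 * lam + 3 * lam ^ 3) / (3 * lam ^ 2) := by
  have hinv : 1 / √2 = √2 / 2 := by
    rw [div_eq_div_iff (by positivity) two_ne_zero, one_mul, mul_self_sqrt zero_le_two]
  have hgap := three_mul_sq_mul_twoThresholdValue lam (1 - (1 + 1 / √2) / lam) (1 - 1 / lam)
  have ht : lam * (1 - 1 / lam) - lam + 1 = 0 := by field_simp; ring
  have hs : lam * (1 - (1 + 1 / √2) / lam) - lam + 1 + √2 / 2 = 0 := by
    rw [hinv]; field_simp; ring
  rw [ht, hs] at hgap
  rw [eq_div_iff (by positivity)]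
  linear_combination hgap

/-- For `λ ≥ 1 + 1/√2`, the two-threshold objective
`A(s,t) = λs(2t-s) + s(1-t)(2+λ+λt) + (1/3)(1-s)²(6+λ+2λs)` on
`0 ≤ s ≤ t ≤ 1` is at most `(1 + √2 + 3λ + 3λ³)/(3λ²)`, with equality at
`s = 1 - (1 + 1/√2)/λ`, `t = 1 - 1/λ`. -/
theorem stmt_7 (lam : ℝ) (hlam : 1 + 1 / Real.sqrt 2 ≤ lam)
    (A : ℝ → ℝ → ℝ)
    (hA : ∀ s t : ℝ, A s t =
      lam * s * (2 * t - s) + s * (1 - t) * (2 + lam + lam * t) +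
        (1 / 3) * (1 - s) ^ 2 * (6 + lam + 2 * lam * s)) :
    (∀ s t : ℝ, 0 ≤ s → s ≤ t → t ≤ 1 →
      A s t ≤ (1 + Real.sqrt 2 + 3 * lam + 3 * lam ^ 3) / (3 * lam ^ 2)) ∧
    A (1 - (1 + 1 / Real.sqrt 2) / lam) (1 - 1 / lam) =
      (1 + Real.sqrt 2 + 3 * lam + 3 * lam ^ 3) / (3 * lam ^ 2) := by
  obtain rfl : A = twoThresholdValue lam := funext₂ hA
  have hlam_pos : 0 < lam := lt_of_lt_of_le (by positivity) hlam
  exact ⟨fun s t hs hst ht => twoThresholdValue_le hlam_pos hs (hst.trans ht) t,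
    twoThresholdValue_optimum hlam_pos.ne'⟩
end

section
/- Let λ ≥ 1 be real and define B(s,t) = λs(2t - s) + s(1-t)(2 + λ + λt) + (1/6)(1-s)²(9 + 2λ + 4λs). Then for all real s, t with 0 ≤ s ≤ t ≤ 1, B(s,t) ≤ (6λ³ + 6λ - 1)/(6λ²), and equality holds at s = t = 1 - 1/λ. -/
/-- For `λ ≥ 1`, the two-threshold objective
`B(s,t) = λs(2t-s) + s(1-t)(2+λ+λt) + (1/6)(1-s)²(9+2λ+4λs)` on
`0 ≤ s ≤ t ≤ 1` is at most `(6λ³ + 6λ - 1)/(6λ²)`, with equality at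
`s = t = 1 - 1/λ`. -/
theorem stmt_10 (lam : ℝ) (hlam : 1 ≤ lam)
    (B : ℝ → ℝ → ℝ)
    (hB : ∀ s t : ℝ, B s t =
      lam * s * (2 * t - s) + s * (1 - t) * (2 + lam + lam * t) +
        (1 / 6) * (1 - s) ^ 2 * (9 + 2 * lam + 4 * lam * s)) :
    (∀ s t : ℝ, 0 ≤ s → s ≤ t → t ≤ 1 →
      B s t ≤ (6 * lam ^ 3 + 6 * lam - 1) / (6 * lam ^ 2)) ∧
    B (1 - 1 / lam) (1 - 1 / lam) =
      (6 * lam ^ 3 + 6 * lam - 1) / (6 * lam ^ 2) := by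
  have hl0 : (0:ℝ) < lam := by linarith
  have h6 : (0:ℝ) < 6 * lam ^ 2 := by positivity
  constructor
  · intro s t hs hst ht
    rw [hB, le_div_iff₀ h6]
    by_cases hc : 1 ≤ lam * (1 - s)
    · nlinarith [mul_nonneg (mul_nonneg (by linarith : (0:ℝ) ≤ 6 * lam) hs)
        (sq_nonneg (lam * t - lam + 1)),
        mul_nonneg (sq_nonneg (lam * (1 - s) - 1)) (by linarith : (0:ℝ) ≤ 4 * lam * (1 - s) - 1)]
    · push_neg at hc
      have h1 : (0:ℝ) ≤ lam * s - lam + 1 := by nlinarith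
      have h2 : lam * s - lam + 1 ≤ lam * t - lam + 1 := by nlinarith
      have h3 : (lam * s - lam + 1) ^ 2 ≤ (lam * t - lam + 1) ^ 2 := by nlinarith
      have h4 : 6 * lam * s * (lam * s - lam + 1) ^ 2 ≤ 6 * lam * s * (lam * t - lam + 1) ^ 2 := by
        nlinarith [mul_nonneg (by linarith : (0:ℝ) ≤ 6 * lam) hs]
      have h5 : (0:ℝ) ≤ (1 - lam * (1 - s)) ^ 2 * (6 * lam - 2 * (lam * (1 - s)) - 1) := by
        nlinarith [sq_nonneg (1 - lam * (1 - s))]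
      nlinarith [h4, h5]
  · rw [hB]
    field_simp
    ring
end

section
/- Index the four edges of a 4-cycle by ZMod 4, with two edges opposite iff they differ by 2. Fix a natural number q ≥ 3 and consider functions f from Fin q to the 2-element subsets of ZMod 4. Say f admits a weight-2 assignment if there exist distinct a, b in Fin q and x ∈ ZMod 4 with x ∈ f(a) and x + 2 ∈ f(b). Then the set of f admitting no weight-2 assignment has exactly 4 elements, namely the constant functions f ≡ {i, i+1} for i ∈ ZMod 4. -/
private def gg : Finset (ZMod 4) → Finset (ZMod 4) :=
  fun s => Finset.univ \ s.image (· + 2)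

private lemma L1 : ∀ s t : Finset (ZMod 4), s.card = 2 → t.card = 2 →
    (∀ x, x ∈ s → x + 2 ∉ t) → t = gg s := by decide

private lemma L3 : ∀ s : Finset (ZMod 4), s.card = 2 → s = gg s →
    ∃ i : ZMod 4, s = {i, i + 1} := by decide

private lemma L4 : ∀ i : ZMod 4, ({i, i + 1} : Finset (ZMod 4)).card = 2 ∧
    ∀ x ∈ ({i, i + 1} : Finset (ZMod 4)), x + 2 ∉ ({i, i + 1} : Finset (ZMod 4)) := by decide

private lemma L5 : ∀ i j : ZMod 4, ({i, i + 1} : Finset (ZMod 4)) = {j, j + 1} → i = j := by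
  decide

/-- For `q ≥ 3`, among functions `f : Fin q → Finset (ZMod 4)` taking 2-element values,
exactly the 4 constant functions `f ≡ {i, i+1}` admit no weight-2 assignment
(i.e. distinct `a, b` and `x` with `x ∈ f a` and `x + 2 ∈ f b`). -/
theorem stmt_13 (q : ℕ) (hq : 3 ≤ q) :
    {f : Fin q → Finset (ZMod 4) | (∀ a, (f a).card = 2) ∧
        ¬ ∃ a b : Fin q, a ≠ b ∧ ∃ x : ZMod 4, x ∈ f a ∧ x + 2 ∈ f b} =
      {f : Fin q → Finset (ZMod 4) |
        ∃ i : ZMod 4, f = fun _ => ({i, i + 1} : Finset (ZMod 4))} ∧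
    ({f : Fin q → Finset (ZMod 4) | (∀ a, (f a).card = 2) ∧
        ¬ ∃ a b : Fin q, a ≠ b ∧ ∃ x : ZMod 4, x ∈ f a ∧ x + 2 ∈ f b}).ncard = 4 := by
  obtain ⟨a0, a1, h01⟩ : ∃ a0 a1 : Fin q, a0 ≠ a1 :=
    ⟨⟨0, by omega⟩, ⟨1, by omega⟩, by simp [Fin.ext_iff]⟩
  have heq : {f : Fin q → Finset (ZMod 4) | (∀ a, (f a).card = 2) ∧
        ¬ ∃ a b : Fin q, a ≠ b ∧ ∃ x : ZMod 4, x ∈ f a ∧ x + 2 ∈ f b} =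
      {f : Fin q → Finset (ZMod 4) |
        ∃ i : ZMod 4, f = fun _ => ({i, i + 1} : Finset (ZMod 4))} := by
    ext f
    simp only [Set.mem_setOf_eq]
    constructor
    · rintro ⟨hc, hno⟩
      push_neg at hno
      have key : ∀ a b : Fin q, a ≠ b → f b = gg (f a) := by
        intro a b hab
        exact L1 _ _ (hc a) (hc b) (fun x hx => hno a b hab x hx)
      have const : ∀ a b : Fin q, f a = f b := by
        intro a b
        rcases eq_or_ne a b with rfl | hab
        · rfl
        · obtain ⟨c, hca, hcb⟩ : ∃ c : Fin q, c ≠ a ∧ c ≠ b := by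
            by_contra hcon
            push_neg at hcon
            have hsub : (Finset.univ : Finset (Fin q)) ⊆ {a, b} := by
              intro c _
              rcases eq_or_ne c a with rfl | h
              · simp
              · simp [hcon c h]
            have := Finset.card_le_card hsub
            have h2 : ({a, b} : Finset (Fin q)).card ≤ 2 :=
              (Finset.card_insert_le a {b}).trans (by simp)
            simp [Finset.card_univ] at this
            omega
          rw [key c a hca, key c b hcb]
      have hfix : f a0 = gg (f a0) := by
        have h1 := key a0 a1 h01
        rw [← const a0 a1] at h1
        exact h1
      obtain ⟨i, hi⟩ := L3 (f a0) (hc a0) hfix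
      exact ⟨i, funext fun a => (const a a0).trans hi⟩
    · rintro ⟨i, rfl⟩
      refine ⟨fun a => (L4 i).1, ?_⟩
      rintro ⟨a, b, hab, x, hx, hx2⟩
      exact (L4 i).2 x hx hx2
  refine ⟨heq, ?_⟩
  rw [heq]
  have himg : {f : Fin q → Finset (ZMod 4) |
        ∃ i : ZMod 4, f = fun _ => ({i, i + 1} : Finset (ZMod 4))} =
      (fun (i : ZMod 4) => (fun _ : Fin q => ({i, i + 1} : Finset (ZMod 4)))) '' Set.univ := by
    ext f
    simp [eq_comm]
  rw [himg]
  have hinj : Function.Injective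
      (fun (i : ZMod 4) => (fun _ : Fin q => ({i, i + 1} : Finset (ZMod 4)))) := by
    intro i j h
    exact L5 i j (congrFun h a0)
  rw [Set.ncard_image_of_injective _ hinj, Set.ncard_univ]
  simp [Nat.card_eq_fintype_card]
end

section
/- Define g : ℕ → ℝ by g(0) = 0, g(1) = 1, g(2) = 11/6, and g(t) = 2 - 4/6^t for t ≥ 3. Then for every real θ > 0, the sequence m ↦ ∑_{t=0}^{m} (choose m t)·(θ/m)^t·(1 - θ/m)^{m-t}·g(t) converges, as m → ∞, to 2 + (exp(-θ)/36)·(72 - 144·exp(θ/6) - 12θ - θ²). -/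
/-!
With `p = θ / m`, the weights `C(m,t) p^t (1-p)^(m-t)` are the Binomial(m, θ/m) probabilities.
Write `g t = 2 · 1^t - 4 · (1/6)^t + δ t`, where `δ` vanishes from `t = 3` on. By the binomial
theorem the expectation of `s^t` is `(1 + p (s - 1))^m → exp (θ (s - 1))`, and by the Poisson
limit theorem the expectation of the finitely supported `δ` tends to its Poisson(θ) expectation.
-/

open Filter Finset Real Topology ProbabilityTheory

theorem sum_choose_mul_pow_mul_pow_mul_pow (n : ℕ) (p s : ℝ) :
    ∑ t ∈ range (n + 1), (n.choose t : ℝ) * p ^ t * (1 - p) ^ (n - t) * s ^ t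
      = (1 + p * (s - 1)) ^ n := by
  rw [show 1 + p * (s - 1) = p * s + (1 - p) by ring, add_pow]
  refine sum_congr rfl fun t _ => ?_
  ring

section BinomialLimits

variable {p : ℕ → ℝ} {r : ℝ}

theorem tendsto_sum_choose_mul_pow_mul_pow_mul_pow
    (hr : Tendsto (fun n => n * p n) atTop (𝓝 r)) (s : ℝ) :
    Tendsto (fun n => ∑ t ∈ range (n + 1),
        (n.choose t : ℝ) * p n ^ t * (1 - p n) ^ (n - t) * s ^ t)
      atTop (𝓝 (exp (r * (s - 1)))) := by
  simp only [sum_choose_mul_pow_mul_pow_mul_pow]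
  refine tendsto_one_add_pow_exp_of_tendsto ?_
  simpa only [mul_assoc] using hr.mul_const (s - 1)

theorem tendsto_sum_choose_mul_pow_mul_of_eq_zero
    (hr : Tendsto (fun n => n * p n) atTop (𝓝 r)) {f : ℕ → ℝ} {N : ℕ}
    (hf : ∀ t, N ≤ t → f t = 0) :
    Tendsto (fun n => ∑ t ∈ range (n + 1),
        (n.choose t : ℝ) * p n ^ t * (1 - p n) ^ (n - t) * f t)
      atTop (𝓝 (∑ t ∈ range N, exp (-r) * r ^ t / t.factorial * f t)) := by
  have hsupp : (fun n => ∑ t ∈ range N,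
        (n.choose t : ℝ) * p n ^ t * (1 - p n) ^ (n - t) * f t) =ᶠ[atTop]
      fun n => ∑ t ∈ range (n + 1),
        (n.choose t : ℝ) * p n ^ t * (1 - p n) ^ (n - t) * f t := by
    filter_upwards [eventually_ge_atTop N] with n hn
    refine sum_subset (range_subset_range.2 (by omega)) fun t _ ht => ?_
    rw [hf t (by simpa using ht), mul_zero]
  refine (tendsto_finsetSum _ fun t _ => ?_).congr' hsupp
  exact (tendsto_choose_mul_pow_of_tendsto_mul_atTop t hr).mul_const (f t)

end BinomialLimits

theorem stmt_15_general (θ : ℝ) (g : ℕ → ℝ)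
    (hg0 : g 0 = 0) (hg1 : g 1 = 1) (hg2 : g 2 = 11 / 6)
    (hg : ∀ t : ℕ, 3 ≤ t → g t = 2 - 4 / (6 : ℝ) ^ t) :
    Filter.Tendsto
      (fun m : ℕ => ∑ t ∈ Finset.range (m + 1),
        (m.choose t : ℝ) * (θ / m) ^ t * (1 - θ / m) ^ (m - t) * g t)
      Filter.atTop
      (nhds (2 + (Real.exp (-θ) / 36) *
        (72 - 144 * Real.exp (θ / 6) - 12 * θ - θ ^ 2))) := by
  have hmean : Tendsto (fun m : ℕ => m * (θ / m)) atTop (𝓝 θ) :=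
    tendsto_const_nhds.congr' <| by
      filter_upwards [eventually_ne_atTop 0] with m hm
      field_simp
  set δ : ℕ → ℝ := fun t => g t - (2 - 4 / (6 : ℝ) ^ t)
  have hδ : ∀ t, 3 ≤ t → δ t = 0 := fun t ht => by simp [δ, hg t ht]
  have hlim := ((tendsto_sum_choose_mul_pow_mul_pow_mul_pow hmean 1).const_mul 2).sub
    ((tendsto_sum_choose_mul_pow_mul_pow_mul_pow hmean (1 / 6)).const_mul 4) |>.add
    (tendsto_sum_choose_mul_pow_mul_of_eq_zero hmean hδ)
  have hvalue : 2 * exp (θ * (1 - 1)) - 4 * exp (θ * (1 / 6 - 1))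
      + ∑ t ∈ range 3, exp (-θ) * θ ^ t / t.factorial * δ t
      = 2 + exp (-θ) / 36 * (72 - 144 * exp (θ / 6) - 12 * θ - θ ^ 2) := by
    rw [show θ * (1 / 6 - 1) = -θ + θ / 6 by ring, exp_add]
    simp only [δ, sum_range_succ, range_one, sum_singleton, hg0, hg1, hg2, Nat.factorial_zero,
      Nat.factorial_one, Nat.factorial_two, sub_self, mul_zero, exp_zero, pow_zero, pow_one,
      Nat.cast_one, Nat.cast_ofNat]
    ring
  rw [← hvalue]
  refine hlim.congr fun m => ?_
  simp only [mul_sum, ← sum_sub_distrib, ← sum_add_distrib, δ, one_pow, one_div_pow]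
  refine sum_congr rfl fun t _ => ?_
  ring

/-- Poisson limit of the Binomial expectation of
`g(0)=0, g(1)=1, g(2)=11/6, g(t)=2-4/6^t (t ≥ 3)`: for `θ > 0`,
`∑_{t=0}^{m} C(m,t)(θ/m)^t(1-θ/m)^{m-t} g(t)` converges to
`2 + (e^{-θ}/36)(72 - 144e^{θ/6} - 12θ - θ²)` as `m → ∞`. -/
theorem stmt_15 (θ : ℝ) (hθ : 0 < θ) (g : ℕ → ℝ)
    (hg0 : g 0 = 0) (hg1 : g 1 = 1) (hg2 : g 2 = 11 / 6)
    (hg : ∀ t : ℕ, 3 ≤ t → g t = 2 - 4 / (6 : ℝ) ^ t) :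
    Filter.Tendsto
      (fun m : ℕ => ∑ t ∈ Finset.range (m + 1),
        (m.choose t : ℝ) * (θ / m) ^ t * (1 - θ / m) ^ (m - t) * g t)
      Filter.atTop
      (nhds (2 + (Real.exp (-θ) / 36) *
        (72 - 144 * Real.exp (θ / 6) - 12 * θ - θ ^ 2))) :=
  stmt_15_general θ g hg0 hg1 hg2 hg
end

section
/- For all real λ > 0 and θ > 0, let s⋆ = (2/θ)·log((θ + √(4λ² + θ²))/(2λ)). Then s⋆ > 0 and (λ/θ)·(1 - exp(-θ·s⋆)) + 2·(1 - exp(-θ·s⋆/2)) = 2 - exp(-θ·s⋆/2). -/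
/-!
Write `y = e^{θ s⋆ / 2} = (θ + √(4λ² + θ²)) / (2λ)`. By the quadratic formula `y` is the root
above `1` of `λ y² - θ y - λ = 0`, so `s⋆ > 0`, and dividing by `y²` gives
`λ (1 - e^{-θ s⋆}) = θ e^{-θ s⋆ / 2}`, which is exactly the crossing equation.
-/

open Real

lemma one_lt_add_sqrt_div {lam θ : ℝ} (hlam : 0 < lam) (hθ : 0 < θ) :
    1 < (θ + √(4 * lam ^ 2 + θ ^ 2)) / (2 * lam) := by
  have hsqrt : 2 * lam ≤ √(4 * lam ^ 2 + θ ^ 2) :=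
    Real.le_sqrt_of_sq_le (by nlinarith)
  rw [one_lt_div (by positivity)]
  linarith

lemma add_sqrt_div_isRoot {lam θ : ℝ} (hlam : lam ≠ 0) :
    lam * ((θ + √(4 * lam ^ 2 + θ ^ 2)) / (2 * lam)) ^ 2 =
      θ * ((θ + √(4 * lam ^ 2 + θ ^ 2)) / (2 * lam)) + lam := by
  have hdiscrim : discrim lam (-θ) (-lam) =
      √(4 * lam ^ 2 + θ ^ 2) * √(4 * lam ^ 2 + θ ^ 2) := by
    rw [mul_self_sqrt (by positivity), discrim]
    ring
  have hroot := ((quadratic_eq_zero_iff hlam hdiscrim _).mpr (Or.inl (by rw [neg_neg])))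
  linear_combination hroot

lemma exp_neg_mul_two_div_mul_log_div_two {θ y : ℝ} (hθ : θ ≠ 0) (hy : 0 < y) :
    exp (-θ * (2 / θ * log y) / 2) = y⁻¹ := by
  rw [show -θ * (2 / θ * log y) / 2 = -log y by field_simp, exp_neg, exp_log hy]

lemma exp_eq_exp_half_sq (x : ℝ) : exp x = exp (x / 2) ^ 2 := by
  rw [← exp_nat_mul]
  ring_nf

lemma crossing_of_isRoot {lam θ y : ℝ} (hθ : θ ≠ 0) (hy : y ≠ 0)
    (hroot : lam * y ^ 2 = θ * y + lam) :
    lam / θ * (1 - y⁻¹ ^ 2) + 2 * (1 - y⁻¹) = 2 - y⁻¹ := by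
  field_simp
  linear_combination hroot

/-- Crossing time of the continuation value and the stopping value in the prophet
IID analysis: with `s⋆ = (2/θ) log((θ + √(4λ² + θ²))/(2λ))`, one has `s⋆ > 0` and
`(λ/θ)(1 - e^{-θs⋆}) + 2(1 - e^{-θs⋆/2}) = 2 - e^{-θs⋆/2}`. -/
theorem stmt_17 (lam θ : ℝ) (hlam : 0 < lam) (hθ : 0 < θ)
    (s : ℝ)
    (hs : s = (2 / θ) * Real.log ((θ + Real.sqrt (4 * lam ^ 2 + θ ^ 2)) / (2 * lam))) :
    0 < s ∧
    (lam / θ) * (1 - Real.exp (-θ * s)) + 2 * (1 - Real.exp (-θ * s / 2)) =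
      2 - Real.exp (-θ * s / 2) := by
  set y := (θ + √(4 * lam ^ 2 + θ ^ 2)) / (2 * lam)
  have hy : 1 < y := one_lt_add_sqrt_div hlam hθ
  have hexp : exp (-θ * s / 2) = y⁻¹ := by
    rw [hs]
    exact exp_neg_mul_two_div_mul_log_div_two hθ.ne' (by linarith)
  refine ⟨by rw [hs]; exact mul_pos (by positivity) (log_pos hy), ?_⟩
  rw [exp_eq_exp_half_sq, hexp]
  exact crossing_of_isRoot hθ.ne' (by positivity) (add_sqrt_div_isRoot hlam.ne')
end

section
/- Let λ = 1.4737 and θ = 2.8224, and set D = √(4λ² + θ²) and s⋆ = (2/θ)·log((θ + D)/(2λ)). Then 0 < s⋆ < 1 and (2 - 2λ/(θ + D) + λ·(1 - s⋆)) < 0.6867 · (λ + 2 + (exp(-θ)/36)·(72 - 144·exp(θ/6) - 12θ - θ²)). -/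
/-!
Everything is an explicit real number, so the proof is interval arithmetic. The exponentials
are bounded by truncated Taylor series (`Real.sum_le_exp_of_nonneg`, `Real.exp_bound'`), the
logarithm from below by comparing its argument with such an exponential and from above by
`log x ≤ x - 1`, and `e^{-θ}` is reduced to `e^{θ/6} = e^{0.4704}` through `e^{-θ} = (e^{θ/6})⁻⁶`.
The true gap in the final inequality is about `2 · 10⁻⁴`, so five or six digits of each quantity
suffice.
-/

open Real Set

lemma exp_0_4704_gt : (1.60063 : ℝ) < exp 0.4704 := by
  have h := sum_le_exp_of_nonneg (x := 0.4704) (by norm_num) 7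
  norm_num [Finset.sum_range_succ, Nat.factorial] at h
  linarith

lemma exp_0_4704_lt : exp 0.4704 < (1.60064 : ℝ) := by
  have h := exp_bound' (x := 0.4704) (by norm_num) (by norm_num) (n := 8) (by norm_num)
  norm_num [Finset.sum_range_succ, Nat.factorial] at h
  linarith

lemma exp_0_851_lt : exp 0.851 < (2.3421 : ℝ) := by
  have h := exp_bound' (x := 0.851) (by norm_num) (by norm_num) (n := 8) (by norm_num)
  norm_num [Finset.sum_range_succ, Nat.factorial] at h
  linarith

lemma sqrt_mem_Ioo : √(4 * 1.4737 ^ 2 + 2.8224 ^ 2 : ℝ) ∈ Ioo 4.0808 4.0809 := by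
  constructor
  · rw [lt_sqrt (by norm_num)]
    norm_num
  · rw [sqrt_lt' (by norm_num)]
    norm_num

lemma log_mem_Ioo {D : ℝ} (hD : D ∈ Ioo 4.0808 4.0809) :
    log ((2.8224 + D) / (2 * 1.4737)) ∈ Ioo 0.851 1.3422 := by
  obtain ⟨hD_gt, hD_lt⟩ := hD
  have hr_gt : (2.3421 : ℝ) < (2.8224 + D) / (2 * 1.4737) := by
    rw [lt_div_iff₀ (by norm_num)]
    linarith
  have hr_lt : (2.8224 + D) / (2 * 1.4737) < 2.3422 := by
    rw [div_lt_iff₀ (by norm_num)]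
    linarith
  have hr_pos : 0 < (2.8224 + D) / (2 * 1.4737) := by linarith
  constructor
  · rw [lt_log_iff_exp_lt hr_pos]
    linarith [exp_0_851_lt]
  · linarith [log_le_sub_one_of_pos hr_pos]

lemma online_value_lt {D s : ℝ} (hD : D ∈ Ioo 4.0808 4.0809) (hs : 0.60303 < s) :
    2 - 2 * 1.4737 / (2.8224 + D) + 1.4737 * (1 - s) < 2.1581 := by
  have hfrac : 2 * 1.4737 / (2.8224 + 4.0809) < 2 * 1.4737 / (2.8224 + D) :=
    div_lt_div_of_pos_left (by norm_num) (by linarith [hD.1]) (by linarith [hD.2])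
  norm_num at hfrac ⊢
  linarith

lemma offline_value_gt :
    (3.1428 : ℝ) < 1.4737 + 2 + exp (-2.8224) / 36 *
      (72 - 144 * exp (2.8224 / 6) - 12 * 2.8224 - 2.8224 ^ 2) := by
  have hexp_neg : exp (-2.8224) = (exp 0.4704 ^ 6)⁻¹ := by
    rw [← exp_nat_mul, ← exp_neg]
    norm_num
  have hexp_neg_lt : exp (-2.8224) < (1.60063 ^ 6)⁻¹ := by
    rw [hexp_neg]
    gcongr
    exact exp_0_4704_gt
  have hfactor_gt : 72 - 144 * 1.60064 - 12 * 2.8224 - 2.8224 ^ 2 <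
      72 - 144 * exp (2.8224 / 6) - 12 * 2.8224 - (2.8224 : ℝ) ^ 2 := by
    norm_num
    linarith [exp_0_4704_lt]
  -- both factors of `e^{-θ} · (72 - 144 e^{θ/6} - …)` are replaced by bounds; the second is negative
  nlinarith [exp_pos (-2.8224), mul_lt_mul_of_pos_left hfactor_gt (exp_pos (-2.8224))]

/-- Numerical bound for the prophet IID 2-bounded auction instance: at
`λ = 1.4737`, `θ = 2.8224`, with `D = √(4λ² + θ²)` and
`s⋆ = (2/θ) log((θ + D)/(2λ))`, one has `0 < s⋆ < 1` and
`2 - 2λ/(θ + D) + λ(1 - s⋆) < 0.6867 · (λ + 2 + (e^{-θ}/36)(72 - 144e^{θ/6} - 12θ - θ²))`. -/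
theorem stmt_18 (lam θ D s : ℝ) (hlam : lam = 1.4737) (hθ : θ = 2.8224)
    (hD : D = Real.sqrt (4 * lam ^ 2 + θ ^ 2))
    (hs : s = (2 / θ) * Real.log ((θ + D) / (2 * lam))) :
    0 < s ∧ s < 1 ∧
    2 - 2 * lam / (θ + D) + lam * (1 - s) <
      0.6867 * (lam + 2 + (Real.exp (-θ) / 36) *
        (72 - 144 * Real.exp (θ / 6) - 12 * θ - θ ^ 2)) := by
  subst hlam hθ hs
  have hD_mem : D ∈ Ioo 4.0808 4.0809 := hD ▸ sqrt_mem_Ioo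
  obtain ⟨hlog_gt, hlog_lt⟩ := log_mem_Ioo hD_mem
  have hs_gt : 0.60303 < 2 / 2.8224 * log ((2.8224 + D) / (2 * 1.4737)) := by linarith
  refine ⟨by linarith, by linarith, ?_⟩
  calc _ < (2.1581 : ℝ) := online_value_lt hD_mem hs_gt
    _ < 0.6867 * 3.1428 := by norm_num
    _ < _ := by gcongr; exact offline_value_gt
end
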